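/- arXiv:2209.04090 — 4 statements merged into one kernel-verified Lean document; each statement's English description precedes it below -/
import Mathlib

section
/- Let (M,d) be a nonempty metric space equipped with its Borel σ-algebra and let μ be a Borel probability measure on M such that every sphere is μ-null, i.e. μ({v ∈ M : d(u,v) = r}) = 0 for all u ∈ M and all r ≥ 0. Then for every u ∈ M and all real numbers τ₁, τ₂ with 0 ≤ τ₁ < τ₂ ≤ 1, the local metric quantile regions are strictly nested: q̄(u,τ₁) ⊆ q̄(u,τ₂), and there exists v ∈ M with τ₁ < F_μ(u,v) ≤ τ₂, so that q̄(u,τ₁) ≠ q̄(u,τ₂). -/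
/-!
The map `r ↦ μ (closedBall u r)` is the distribution function of the law of `dist u` under `μ`;
null spheres make that law atomless, so the map is continuous. It vanishes for `r < 0` and tends
to `1`, so there is a largest radius `a` with `μ (closedBall u a) ≤ τ₁`. By continuity some
`b > a` still has `μ (closedBall u b) < τ₂`, and as `μ (closedBall u b) > τ₁` the annulus
`a < dist u v ≤ b` is not empty. Every `v` in it has `τ₁ < F_μ(u,v) < τ₂`.
-/

open MeasureTheory Metric Set Filter Topology ProbabilityTheory

theorem StieltjesFunction.continuousAt_of_measure_singleton (f : StieltjesFunction ℝ) {x : ℝ}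
    (hx : f.measure {x} = 0) : ContinuousAt f x := by
  have hleft : Function.leftLim f x = f x := by
    rw [f.measure_singleton, ENNReal.ofReal_eq_zero, sub_nonpos] at hx
    exact le_antisymm (f.mono.leftLim_le le_rfl) hx
  refine continuousAt_iff_continuous_left_right.2 ⟨?_, f.right_continuous x⟩
  rw [← continuousWithinAt_Iio_iff_Iic]
  exact f.mono.continuousWithinAt_Iio_iff_leftLim_eq.2 hleft

theorem ProbabilityTheory.continuous_cdf (ν : Measure ℝ) [IsProbabilityMeasure ν]
    [NullSingletonClass ν] : Continuous (cdf ν) :=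
  continuous_iff_continuousAt.2 fun x =>
    (cdf ν).continuousAt_of_measure_singleton (by rw [measure_cdf, measure_singleton])

theorem Monotone.exists_mapsTo_Ioc {F : ℝ → ℝ} (hF : Monotone F) (hc : Continuous F)
    {x₀ R τ₁ τ₂ : ℝ} (hx₀ : F x₀ ≤ τ₁) (hR : τ₁ < F R) (h12 : τ₁ < τ₂) :
    ∃ a b, F a < F b ∧ MapsTo F (Ioc a b) (Ioc τ₁ τ₂) := by
  have hbdd : BddAbove {x | F x ≤ τ₁} :=
    ⟨R, fun x hx => le_of_not_gt fun hRx => (hR.trans_le (hF hRx.le)).not_ge hx⟩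
  obtain ⟨ha, hgt⟩ := (isClosed_le hc continuous_const).isGreatest_csSup ⟨x₀, hx₀⟩ hbdd
  set a := sSup {x | F x ≤ τ₁}
  have hτ₁_lt : ∀ x, a < x → τ₁ < F x := fun x hx => lt_of_not_ge fun h => (hgt h).not_gt hx
  obtain ⟨b, hFb, hab⟩ : ∃ b, F b < τ₂ ∧ a < b :=
    (((hc.tendsto a).mono_left (nhdsWithin_le_nhds (s := Ioi a))).eventually
      (gt_mem_nhds (ha.trans_lt h12)) |>.and self_mem_nhdsWithin).exists
  exact ⟨a, b, (show F a ≤ τ₁ from ha).trans_lt (hτ₁_lt b hab),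
    fun x hx => ⟨hτ₁_lt x hx.1, (hF hx.2).trans hFb.le⟩⟩

section MetricSpace

variable {M : Type*} [MetricSpace M] [MeasurableSpace M] [BorelSpace M] (μ : Measure M) (u : M)

theorem measurable_dist_left : Measurable (dist u) := by fun_prop

theorem nullSingletonClass_map_dist (hsph : ∀ r : ℝ, 0 ≤ r → μ {v | dist u v = r} = 0) :
    NullSingletonClass (μ.map (dist u)) := by
  refine ⟨fun r => ?_⟩
  rw [Measure.map_apply (measurable_dist_left u) (measurableSet_singleton r)]
  rcases lt_or_ge r 0 with hr | hr
  · convert measure_empty (μ := μ)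
    exact eq_empty_of_forall_notMem fun v hv => (dist_nonneg.trans_eq hv).not_gt hr
  · exact hsph r hr

theorem cdf_map_dist [IsProbabilityMeasure μ] (r : ℝ) :
    cdf (μ.map (dist u)) r = μ.real (closedBall u r) := by
  have := Measure.isProbabilityMeasure_map (μ := μ) (measurable_dist_left u).aemeasurable
  rw [cdf_eq_real, map_measureReal_apply (measurable_dist_left u) measurableSet_Iic]
  congr 1
  ext v
  simp [dist_comm]

end MetricSpace

theorem exists_dist_mem_Ioc_of_measureReal_closedBall_lt {M : Type*} [MetricSpace M]
    [MeasurableSpace M] {μ : Measure M} [IsFiniteMeasure μ] {u : M} {a b : ℝ}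
    (h : μ.real (closedBall u a) < μ.real (closedBall u b)) : ∃ v, dist u v ∈ Ioc a b := by
  by_contra! hv
  refine h.not_ge (measureReal_mono fun v hvb => ?_)
  rw [mem_closedBall, dist_comm] at hvb ⊢
  exact le_of_not_gt fun hav => hv v ⟨hav, hvb⟩

theorem local_quantile_regions_strictly_nested_general
    {M : Type*} [MetricSpace M] [MeasurableSpace M] [BorelSpace M]
    (μ : Measure M) [IsProbabilityMeasure μ]
    (hsph : ∀ (u : M) (r : ℝ), 0 ≤ r → μ {v | dist u v = r} = 0)
    (u : M) (τ₁ τ₂ : ℝ) (h0 : 0 ≤ τ₁) (h12 : τ₁ < τ₂) (h21 : τ₂ ≤ 1) :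
    {v : M | (μ (closedBall u (dist u v))).toReal ≤ τ₁} ⊆
      {v : M | (μ (closedBall u (dist u v))).toReal ≤ τ₂} ∧
    (∃ v : M, τ₁ < (μ (closedBall u (dist u v))).toReal ∧
      (μ (closedBall u (dist u v))).toReal ≤ τ₂) ∧
    {v : M | (μ (closedBall u (dist u v))).toReal ≤ τ₁} ≠
      {v : M | (μ (closedBall u (dist u v))).toReal ≤ τ₂} := by
  set ν := μ.map (dist u)
  have := Measure.isProbabilityMeasure_map (μ := μ) (measurable_dist_left u).aemeasurable
  have := nullSingletonClass_map_dist μ u (hsph u)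
  have hF : ∀ r, cdf ν r = μ.real (closedBall u r) := cdf_map_dist μ u
  obtain ⟨R, hR⟩ := ((tendsto_cdf_atTop ν).eventually (lt_mem_nhds (h12.trans_le h21))).exists
  have hF₀ : cdf ν (-1) ≤ τ₁ := by simpa [hF, closedBall_eq_empty.2 neg_one_lt_zero] using h0
  obtain ⟨a, b, hab, hmaps⟩ := (monotone_cdf ν).exists_mapsTo_Ioc (continuous_cdf ν) hF₀ hR h12
  rw [hF, hF] at hab
  obtain ⟨v, hv⟩ := exists_dist_mem_Ioc_of_measureReal_closedBall_lt hab
  have hFv : μ.real (closedBall u (dist u v)) ∈ Ioc τ₁ τ₂ := hF _ ▸ hmaps hv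
  exact ⟨fun w hw => hw.trans h12.le, ⟨v, hFv⟩,
    fun heq => (heq ▸ hFv.2 : v ∈ {w | μ.real (closedBall u (dist u w)) ≤ τ₁}).not_gt hFv.1⟩

/-- Strict nestedness of the local metric quantile regions
`q̄(u,τ) = {v | F_μ(u,v) ≤ τ}`, where `F_μ(u,v) = μ(closedBall u (dist u v))` is the
metric distribution function, under the assumption that all spheres are `μ`-null. -/
theorem local_quantile_regions_strictly_nested
    {M : Type*} [MetricSpace M] [Nonempty M] [MeasurableSpace M] [BorelSpace M]
    (μ : Measure M) [IsProbabilityMeasure μ]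
    (hsph : ∀ (u : M) (r : ℝ), 0 ≤ r → μ {v | dist u v = r} = 0)
    (u : M) (τ₁ τ₂ : ℝ) (h0 : 0 ≤ τ₁) (h12 : τ₁ < τ₂) (h21 : τ₂ ≤ 1) :
    {v : M | (μ (closedBall u (dist u v))).toReal ≤ τ₁} ⊆
      {v : M | (μ (closedBall u (dist u v))).toReal ≤ τ₂} ∧
    (∃ v : M, τ₁ < (μ (closedBall u (dist u v))).toReal ∧
      (μ (closedBall u (dist u v))).toReal ≤ τ₂) ∧
    {v : M | (μ (closedBall u (dist u v))).toReal ≤ τ₁} ≠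
      {v : M | (μ (closedBall u (dist u v))).toReal ≤ τ₂} :=
  local_quantile_regions_strictly_nested_general μ hsph u τ₁ τ₂ h0 h12 h21
end

section
/- Fix a point u in a metric space (M,d) with its Borel σ-algebra, let μ be a Borel probability measure on M with μ({v ∈ M : d(u,v) = r}) = 0 for every r ≥ 0, let X₁,…,Xₙ be i.i.d. with law μ, and fix τ ∈ [1/n, 1]. Then almost surely the following holds: a τ-th empirical local quantile at u exists, and every τ-th empirical local quantile X_j satisfies τ ≤ F_n(u,X_j) < τ + 1/n; equivalently, setting Δ_j := F_μ(u,X_j) − F_n(u,X_j), one has τ + Δ_j ≤ F_μ(u,X_j) < τ + 1/n + Δ_j, i.e. X_j lies in the set difference of inner quantile regions q̃(u, τ + 1/n + Δ_j) \ q̃(u, τ + Δ_j). -/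
open MeasureTheory Metric ProbabilityTheory

/-- The empirical metric distribution function
`F_n(u,v) = (1/n)·#{i : dist u (x i) ≤ dist u v}`. -/
noncomputable def emdf {M : Type*} [MetricSpace M] {n : ℕ}
    (x : Fin n → M) (u v : M) : ℝ :=
  ((Finset.univ.filter fun i => dist u (x i) ≤ dist u v).card : ℝ) / n

/-- The metric distribution function `F_μ(u,v) = μ(closedBall u (dist u v))`. -/
noncomputable def mdf {M : Type*} [MetricSpace M] [MeasurableSpace M]
    (μ : Measure M) (u v : M) : ℝ :=
  (μ (closedBall u (dist u v))).toReal

/-- `x j` is a `τ`-th empirical local quantile at `u`: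
`F_n(u, x_j) ≥ τ` and `F_n(u, x_j)` is minimal among sample values `≥ τ`. -/
def IsEmpLocQuantile {M : Type*} [MetricSpace M] {n : ℕ}
    (x : Fin n → M) (u : M) (τ : ℝ) (j : Fin n) : Prop :=
  τ ≤ emdf x u (x j) ∧ ∀ i : Fin n, τ ≤ emdf x u (x i) → emdf x u (x j) ≤ emdf x u (x i)

/-! Almost surely no two sample points are equidistant from `u`: for a pair `X_i, X_j` the tie
event has probability `(μ ⊗ μ){(a, b) | d(u,a) = d(u,b)} = ∫ μ(sphere u (d(u,a))) dμ(a) = 0`.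
Without ties, `n · F_n(u, ·)` ranks the sample, so the values `F_n(u, X_i)` are exactly
`1/n, 2/n, …, 1`; hence the smallest of them that is `≥ τ` exceeds the previous one, which is
`< τ`, by `1/n`. Membership in `q̃(u, τ + 1/n + Δ_j) \ q̃(u, τ + Δ_j)` is this band rewritten. -/

section SampleRank

open Finset Function

variable {ι α : Type*} [Fintype ι] [LinearOrder α] (f : ι → α)

def sampleRank (i : ι) : ℕ := #{k | f k ≤ f i}

theorem one_le_sampleRank (i : ι) : 1 ≤ sampleRank f i :=
  card_pos.mpr ⟨i, by simp⟩

theorem sampleRank_le_card (i : ι) : sampleRank f i ≤ Fintype.card ι :=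
  card_le_univ _

theorem sampleRank_eq_card_of_forall_le {i : ι} (h : ∀ k, f k ≤ f i) :
    sampleRank f i = Fintype.card ι := by
  simp [sampleRank, h]

theorem sampleRank_lt_sampleRank {i j : ι} (h : f i < f j) : sampleRank f i < sampleRank f j :=
  card_lt_card <| (ssubset_iff_of_subset fun k hk => by
    simp only [mem_filter, mem_univ, true_and] at hk ⊢
    exact hk.trans h.le).mpr ⟨j, by simp, by simpa using h⟩

variable {f}

theorem sampleRank_injective (hf : Injective f) : Injective (sampleRank f) := by
  intro i j hij
  by_contra hne
  rcases (hf.ne hne).lt_or_gt with h | h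
  · exact (sampleRank_lt_sampleRank f h).ne hij
  · exact (sampleRank_lt_sampleRank f h).ne' hij

theorem image_sampleRank (hf : Injective f) :
    univ.image (sampleRank f) = Icc 1 (Fintype.card ι) := by
  refine eq_of_subset_of_card_le (fun k hk => ?_) ?_
  · obtain ⟨i, -, rfl⟩ := mem_image.mp hk
    exact mem_Icc.mpr ⟨one_le_sampleRank f i, sampleRank_le_card f i⟩
  · rw [Nat.card_Icc, card_image_of_injective _ (sampleRank_injective hf)]
    simp

end SampleRank

section EmpiricalQuantile

open Finset Function

variable {M : Type*} [MetricSpace M] {n : ℕ} (x : Fin n → M) (u : M)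

theorem emdf_eq_sampleRank (i : Fin n) :
    emdf x u (x i) = sampleRank (fun k => dist u (x k)) i / n :=
  rfl

theorem exists_isEmpLocQuantile (hn : 0 < n) {τ : ℝ} (hτ : τ ≤ 1) :
    ∃ j, IsEmpLocQuantile x u τ j := by
  have : Nonempty (Fin n) := ⟨⟨0, hn⟩⟩
  obtain ⟨jmax, -, hjmax⟩ := exists_max_image univ (fun k => dist u (x k)) univ_nonempty
  have hjmax_one : emdf x u (x jmax) = 1 := by
    rw [emdf_eq_sampleRank, sampleRank_eq_card_of_forall_le _ fun k => hjmax k (mem_univ k)]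
    simp [hn.ne']
  obtain ⟨j, hj, hmin⟩ := exists_min_image {i | τ ≤ emdf x u (x i)} (fun i => emdf x u (x i))
    ⟨jmax, by simp [hjmax_one, hτ]⟩
  exact ⟨j, (mem_filter.mp hj).2, fun i hi => hmin i (mem_filter.mpr ⟨mem_univ i, hi⟩)⟩

theorem emdf_lt_add_of_isEmpLocQuantile (hinj : Injective fun k => dist u (x k)) {τ : ℝ}
    (hτ : 1 / (n : ℝ) ≤ τ) {j : Fin n} (hj : IsEmpLocQuantile x u τ j) :
    emdf x u (x j) < τ + 1 / n := by
  set r := sampleRank (fun k => dist u (x k)) j with hr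
  have hr_pos : 1 ≤ r := one_le_sampleRank _ j
  have hr_le : r ≤ n := by simpa using sampleRank_le_card (fun k => dist u (x k)) j
  have hn : (0 : ℝ) < 1 / n := one_div_pos.mpr (by exact_mod_cast hr_pos.trans hr_le)
  suffices emdf x u (x j) - 1 / n < τ by linarith
  rcases hr_pos.eq_or_lt with hr_one | hr_gt_one
  · rw [emdf_eq_sampleRank, ← hr, ← hr_one]
    simpa using hn.trans_le hτ
  have hmem : r - 1 ∈ univ.image (sampleRank fun k => dist u (x k)) := by
    rw [image_sampleRank hinj, mem_Icc, Fintype.card_fin]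
    omega
  obtain ⟨i, -, hi⟩ := mem_image.mp hmem
  have hprev : emdf x u (x i) = emdf x u (x j) - 1 / n := by
    rw [emdf_eq_sampleRank, emdf_eq_sampleRank, hi, ← hr, Nat.cast_pred hr_pos, sub_div]
  by_contra! hle
  linarith [hj.2 i (hprev ▸ hle)]

end EmpiricalQuantile

section Ties

open Function

theorem measurableSet_setOf_apply_fst_eq_apply_snd {α β : Type*} [MeasurableSpace α]
    [MeasurableSpace β] [MeasurableEq β] {g : α → β} (hg : Measurable g) :
    MeasurableSet {p : α × α | g p.1 = g p.2} :=
  measurableSet_eq_fun (hg.comp measurable_fst) (hg.comp measurable_snd)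

theorem MeasureTheory.Measure.prod_setOf_apply_eq_apply_eq_zero {α β : Type*} [MeasurableSpace α]
    [MeasurableSpace β] [MeasurableEq β] (μ ν : Measure α) [SFinite ν] {g : α → β}
    (hg : Measurable g) (hν : ∀ a, ν {b | g b = g a} = 0) :
    (μ.prod ν) {p | g p.1 = g p.2} = 0 := by
  rw [Measure.prod_apply (measurableSet_setOf_apply_fst_eq_apply_snd hg)]
  have hsection : ∀ a, Prod.mk a ⁻¹' {p : α × α | g p.1 = g p.2} = {b | g b = g a} :=
    fun a => Set.ext fun _ => eq_comm
  simp only [hsection, hν, lintegral_zero]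

theorem ae_injective_comp_of_iIndepFun {Ω ι α β : Type*} [MeasurableSpace Ω] [MeasurableSpace α]
    [MeasurableSpace β] [MeasurableEq β] [Countable ι] {P : Measure Ω} [IsFiniteMeasure P]
    {μ : Measure α} [SFinite μ] {X : ι → Ω → α} (hXmeas : ∀ i, Measurable (X i))
    (hXlaw : ∀ i, P.map (X i) = μ) (hXindep : iIndepFun X P) {g : α → β} (hg : Measurable g)
    (hμ : ∀ a, μ {b | g b = g a} = 0) :
    ∀ᵐ ω ∂P, Injective fun i => g (X i ω) := by
  have htie : ∀ i j, i ≠ j → P {ω | g (X i ω) = g (X j ω)} = 0 := by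
    intro i j hij
    have hpair : P.map (fun ω => (X i ω, X j ω)) = μ.prod μ := by
      rw [(indepFun_iff_map_prod_eq_prod_map_map (hXmeas i).aemeasurable
        (hXmeas j).aemeasurable).mp (hXindep.indepFun hij), hXlaw, hXlaw]
    rw [← Measure.prod_setOf_apply_eq_apply_eq_zero μ μ hg hμ, ← hpair,
      Measure.map_apply ((hXmeas i).prodMk (hXmeas j))
        (measurableSet_setOf_apply_fst_eq_apply_snd hg)]
    rfl
  have hpairs : ∀ i j, ∀ᵐ ω ∂P, g (X i ω) = g (X j ω) → i = j := by
    intro i j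
    rcases eq_or_ne i j with rfl | hij
    · exact .of_forall fun _ _ => rfl
    · filter_upwards [measure_eq_zero_iff_ae_notMem.mp (htie i j hij)] with ω hω h
      exact absurd h hω
  filter_upwards [ae_all_iff.mpr fun i => ae_all_iff.mpr (hpairs i)] with ω h i j
  exact h i j

end Ties

/-- Almost surely, a `τ`-th empirical local quantile at `u` exists, and
every such quantile `X_j` satisfies `τ ≤ F_n(u,X_j) < τ + 1/n`; equivalently, with
`Δ_j = F_μ(u,X_j) − F_n(u,X_j)`, `X_j` lies in
`q̃(u, τ + 1/n + Δ_j) \ q̃(u, τ + Δ_j)` where `q̃(u,t) = {v | F_μ(u,v) < t}`. -/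
theorem emp_local_quantile_band
    {M : Type*} [MetricSpace M] [MeasurableSpace M] [BorelSpace M]
    (μ : Measure M) [IsProbabilityMeasure μ] (u : M)
    (hsph : ∀ r : ℝ, 0 ≤ r → μ {v | dist u v = r} = 0)
    {Ω : Type*} [MeasureSpace Ω] [IsProbabilityMeasure (ℙ : Measure Ω)]
    {n : ℕ} (hn : 0 < n) (X : Fin n → Ω → M)
    (hXmeas : ∀ i, Measurable (X i))
    (hXlaw : ∀ i, Measure.map (X i) ℙ = μ)
    (hXindep : iIndepFun X ℙ)
    (τ : ℝ) (hτ1 : 1 / (n : ℝ) ≤ τ) (hτ2 : τ ≤ 1) :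
    ∀ᵐ ω ∂(ℙ : Measure Ω),
      (∃ j : Fin n, IsEmpLocQuantile (fun i => X i ω) u τ j) ∧
      ∀ j : Fin n, IsEmpLocQuantile (fun i => X i ω) u τ j →
        (τ ≤ emdf (fun i => X i ω) u (X j ω) ∧
          emdf (fun i => X i ω) u (X j ω) < τ + 1 / (n : ℝ)) ∧
        X j ω ∈
          {v : M | mdf μ u v <
              τ + 1 / (n : ℝ) + (mdf μ u (X j ω) - emdf (fun i => X i ω) u (X j ω))} \
          {v : M | mdf μ u v <
              τ + (mdf μ u (X j ω) - emdf (fun i => X i ω) u (X j ω))} := by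
  have hdist : Measurable fun v : M => dist u v := (continuous_const.dist continuous_id).measurable
  filter_upwards [ae_injective_comp_of_iIndepFun hXmeas hXlaw hXindep hdist
    fun a => hsph _ dist_nonneg] with ω hinj
  refine ⟨exists_isEmpLocQuantile _ u hn hτ2, fun j hj => ?_⟩
  have hlt := emdf_lt_add_of_isEmpLocQuantile _ u hinj hτ1 hj
  refine ⟨⟨hj.1, hlt⟩, ?_, ?_⟩ <;> simp only [Set.mem_ofPred_eq, not_lt] <;> linarith [hj.1]
end

section
/- Let (M,d) and (M',d') be metric spaces with their Borel σ-algebras, T : M → M' a bijective isometry, μ a Borel probability measure on M, and μ' := T_*μ. Then for every u ∈ M and every τ ∈ [0,1]: T '' {v ∈ M : F_μ(u,v) = τ} = {v' ∈ M' : F_{μ'}(T u, v') = τ}, and the same identity holds with '≤ τ' and with '< τ' in place of '= τ' (equivariance of the local quantiles, quantile regions, and inner quantile regions under isometry). -/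
open MeasureTheory Metric

/-- Equivariance of the local quantiles, quantile regions and inner
quantile regions under a bijective isometry `T`, with `μ' = T_*μ`. -/
theorem local_quantiles_isometry_equivariant
    {M M' : Type*} [MetricSpace M] [MetricSpace M']
    [MeasurableSpace M] [BorelSpace M] [MeasurableSpace M'] [BorelSpace M']
    (T : M → M') (hTbij : Function.Bijective T)
    (hT : ∀ u v : M, dist (T u) (T v) = dist u v)
    (μ : Measure M) [IsProbabilityMeasure μ]
    (u : M) (τ : ℝ) (hτ : τ ∈ Set.Icc (0 : ℝ) 1) :
    T '' {v : M | mdf μ u v = τ} = {v' : M' | mdf (μ.map T) (T u) v' = τ} ∧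
    T '' {v : M | mdf μ u v ≤ τ} = {v' : M' | mdf (μ.map T) (T u) v' ≤ τ} ∧
    T '' {v : M | mdf μ u v < τ} = {v' : M' | mdf (μ.map T) (T u) v' < τ} := by
  have hiso : Isometry T := Isometry.of_dist_eq hT
  have hmeas : Measurable T := hiso.continuous.measurable
  have hpre : ∀ v : M, T ⁻¹' (closedBall (T u) (dist u v)) = closedBall u (dist u v) := by
    intro v
    ext w
    simp [mem_closedBall, hT]
  have key : ∀ v : M, mdf (μ.map T) (T u) (T v) = mdf μ u v := by
    intro v
    unfold mdf
    rw [hT, Measure.map_apply hmeas measurableSet_closedBall, hpre]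
  refine ⟨?_, ?_, ?_⟩ <;>
  · ext w
    obtain ⟨v, rfl⟩ := hTbij.surjective w
    simp only [Set.mem_image, Set.mem_setOf_eq, key]
    constructor
    · rintro ⟨x, hx, hxy⟩
      rwa [hTbij.injective hxy] at hx
    · intro h
      exact ⟨v, h, rfl⟩
end

section
/- Let (M,d) and (M',d') be metric spaces with their Borel σ-algebras, T : M → M' a bijective isometry, μ a Borel probability measure on M, and ν := T_*μ. Assume J_μ(u) := ∫_M μ(B̄(x, d(x,u))) dμ(x) and J_ν(u') := ∫_{M'} ν(B̄'(y, d'(y,u'))) dν(y) are Borel measurable, and define F_J(t) := μ({x : J_μ(x) ≤ t}) and F'_J(t) := ν({y : J_ν(y) ≤ t}). Then for every τ ∈ [0,1]: T '' {u ∈ M : F_J(J_μ(u)) ≤ τ} = {u' ∈ M' : F'_J(J_ν(u')) ≤ τ}, and the same identity holds with '= τ' and with '< τ' in place of '≤ τ' (equivariance of the global quantiles and global quantile regions under isometry). -/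
open MeasureTheory Metric

/-- Equivariance of the global quantiles and global quantile regions
under a bijective isometry `T`, with `ν = T_*μ`, `J_μ(u) = ∫ μ(B̄(x, d(x,u))) dμ(x)`,
`J_ν(u') = ∫ ν(B̄'(y, d'(y,u'))) dν(y)`, `F_J(t) = μ{x | J_μ(x) ≤ t}` and
`F'_J(t) = ν{y | J_ν(y) ≤ t}`. -/
theorem global_quantiles_isometry_equivariant
    {M M' : Type*} [MetricSpace M] [MetricSpace M']
    [MeasurableSpace M] [BorelSpace M] [MeasurableSpace M'] [BorelSpace M']
    (T : M → M') (hTbij : Function.Bijective T)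
    (hT : ∀ u v : M, dist (T u) (T v) = dist u v)
    (μ : Measure M) [IsProbabilityMeasure μ]
    (Jm : M → ℝ)
    (hJm : ∀ u : M, Jm u = ∫ x, (μ (closedBall x (dist x u))).toReal ∂μ)
    (Jm' : M' → ℝ)
    (hJm' : ∀ u' : M', Jm' u' = ∫ y, ((μ.map T) (closedBall y (dist y u'))).toReal ∂(μ.map T))
    (hJmmeas : Measurable Jm) (hJm'meas : Measurable Jm')
    (FJ : ℝ → ℝ) (hFJ : ∀ t : ℝ, FJ t = (μ {x | Jm x ≤ t}).toReal)
    (FJ' : ℝ → ℝ) (hFJ' : ∀ t : ℝ, FJ' t = ((μ.map T) {y | Jm' y ≤ t}).toReal)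
    (τ : ℝ) (hτ : τ ∈ Set.Icc (0 : ℝ) 1) :
    T '' {u : M | FJ (Jm u) ≤ τ} = {u' : M' | FJ' (Jm' u') ≤ τ} ∧
    T '' {u : M | FJ (Jm u) = τ} = {u' : M' | FJ' (Jm' u') = τ} ∧
    T '' {u : M | FJ (Jm u) < τ} = {u' : M' | FJ' (Jm' u') < τ} := by
  -- T as an isometry equivalence
  have hIso : Isometry T := Isometry.of_dist_eq hT
  let e : M ≃ᵢ M' :=
    { toEquiv := Equiv.ofBijective T hTbij
      isometry_toFun := hIso }
  have hEmb : MeasurableEmbedding T := e.toHomeomorph.measurableEmbedding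
  have hTmeas : Measurable T := hEmb.measurable
  -- preimage of closed ball
  have hball : ∀ (x : M) (r : ℝ), T ⁻¹' closedBall (T x) r = closedBall x r := by
    intro x r
    ext y
    simp [mem_closedBall, hT]
  -- key: Jm' ∘ T = Jm
  have hJcomp : ∀ u : M, Jm' (T u) = Jm u := by
    intro u
    rw [hJm' (T u), hJm u, hEmb.integral_map]
    congr 1
    ext x
    rw [Measure.map_apply hTmeas measurableSet_closedBall, hT, hball]
  -- FJ' = FJ
  have hFcomp : ∀ t : ℝ, FJ' t = FJ t := by
    intro t
    rw [hFJ' t, hFJ t, Measure.map_apply hTmeas (measurableSet_le hJm'meas measurable_const)]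
    congr 2
    ext x
    simp [Set.mem_preimage, hJcomp]
  -- generic image lemma
  have key : ∀ P : ℝ → Prop, T '' {u : M | P (FJ (Jm u))} = {u' : M' | P (FJ' (Jm' u'))} := by
    intro P
    ext u'
    obtain ⟨u, rfl⟩ := hTbij.surjective u'
    constructor
    · rintro ⟨v, hv, hvu⟩
      have : v = u := hTbij.injective hvu
      subst this
      simpa [hFcomp, hJcomp] using hv
    · intro h
      exact ⟨u, by simpa [hFcomp, hJcomp] using h, rfl⟩
  exact ⟨key (· ≤ τ), key (· = τ), key (· < τ)⟩
end
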